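/- arXiv:2302.12349 — 5 statements merged into one kernel-verified Lean document; each statement's English description precedes it below -/
import Mathlib

section
/- For any vectors x and y in a real inner product space with nonzero norms, the inner product ⟨x, x/‖x‖ − y/‖y‖⟩ is at most ‖x − y‖²/(2‖y‖). -/
open RealInnerProductSpace

theorem stmt_0 {H : Type*} [NormedAddCommGroup H] [InnerProductSpace ℝ H]
    (x y : H) (hx : 0 < ‖x‖) (hy : 0 < ‖y‖) :
    ⟪x, ‖x‖⁻¹ • x - ‖y‖⁻¹ • y⟫ ≤ ‖x - y‖ ^ 2 / (2 * ‖y‖) := by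
  have hexp : ‖x - y‖ ^ 2 = ‖x‖ ^ 2 - 2 * ⟪x, y⟫ + ‖y‖ ^ 2 := by
    rw [@norm_sub_sq_real]
  have hix : ‖x‖⁻¹ * ‖x‖ = 1 := inv_mul_cancel₀ hx.ne'
  have hiy : ‖y‖⁻¹ * ‖y‖ = 1 := inv_mul_cancel₀ hy.ne'
  rw [inner_sub_right, real_inner_smul_right, real_inner_smul_right,
    real_inner_self_eq_norm_sq, hexp, le_div_iff₀ (by positivity)]
  nlinarith [sq_nonneg (‖x‖ - ‖y‖), mul_pos hx hy, sq_nonneg (‖x‖⁻¹ * ⟪x, y⟫)]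
end

section
/- If x* maximizes the unit-normed element r* over the unit ball in a Hilbert space H (i.e., x* = r*/‖r*‖) and x̂ = r̂/‖r̂‖ for another nonzero element r̂, then the excess risk ⟨r*, x*⟩ − ⟨r*, x̂⟩ is at most ‖r* − r̂‖²/(2‖r̂‖). -/
open RealInnerProductSpace

/- With a = ‖r*‖, b = ‖r̂‖ and c = ⟪r*, r̂⟫, the excess risk is a - c / b, while
‖r* - r̂‖² = a² - 2c + b². Multiplying by 2b, the claim becomes 2ab ≤ a² + b². -/

theorem real_inner_inv_norm_smul_self {H : Type*} [NormedAddCommGroup H]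
    [InnerProductSpace ℝ H] (r : H) : ⟪r, ‖r‖⁻¹ • r⟫ = ‖r‖ := by
  rcases eq_or_ne r 0 with rfl | hr
  · simp
  rw [real_inner_smul_right, real_inner_self_eq_norm_sq]
  field_simp [norm_ne_zero_iff.mpr hr]

theorem norm_sub_real_inner_inv_norm_smul_le {H : Type*} [NormedAddCommGroup H]
    [InnerProductSpace ℝ H] (r s : H) (hs : s ≠ 0) :
    ‖r‖ - ⟪r, ‖s‖⁻¹ • s⟫ ≤ ‖r - s‖ ^ 2 / (2 * ‖s‖) := by
  have hs' : 0 < ‖s‖ := norm_pos_iff.mpr hs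
  rw [le_div_iff₀ (by positivity), norm_sub_sq_real, real_inner_smul_right]
  calc (‖r‖ - ‖s‖⁻¹ * ⟪r, s⟫) * (2 * ‖s‖) = 2 * ‖r‖ * ‖s‖ - 2 * ⟪r, s⟫ := by
        field_simp
    _ ≤ ‖r‖ ^ 2 - 2 * ⟪r, s⟫ + ‖s‖ ^ 2 := by nlinarith [sq_nonneg (‖r‖ - ‖s‖)]

theorem stmt_2_general {H : Type*} [NormedAddCommGroup H] [InnerProductSpace ℝ H]
    (rstar rhat : H) (hhat : rhat ≠ 0) :
    ⟪rstar, ‖rstar‖⁻¹ • rstar⟫ - ⟪rstar, ‖rhat‖⁻¹ • rhat⟫ ≤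
      ‖rstar - rhat‖ ^ 2 / (2 * ‖rhat‖) := by
  rw [real_inner_inv_norm_smul_self]
  exact norm_sub_real_inner_inv_norm_smul_le rstar rhat hhat

theorem stmt_2 {H : Type*} [NormedAddCommGroup H] [InnerProductSpace ℝ H]
    (rstar rhat : H) (hstar : rstar ≠ 0) (hhat : rhat ≠ 0) :
    ⟪rstar, ‖rstar‖⁻¹ • rstar⟫ - ⟪rstar, ‖rhat‖⁻¹ • rhat⟫ ≤
      ‖rstar - rhat‖ ^ 2 / (2 * ‖rhat‖) :=
  stmt_2_general rstar rhat hhat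
end

section
/- If a kernel K : X × X → ℝ satisfies |K(x,y) − K(x,x)| ≤ L‖x−y‖ and K(x,x) = 1 for all x, and f is in the RKHS of K with ‖f‖ ≤ 1, then |f(x) − f(y)| ≤ √(2L‖x−y‖) for all x, y ∈ X. -/
open RealInnerProductSpace

/-- RKHS functions are realized via a feature map `Φ` into a Hilbert space `H`:
`K x y = ⟪Φ x, Φ y⟫` and `f x = ⟪g, Φ x⟫` with `‖g‖ ≤ 1` (reproducing property). -/
theorem stmt_10 {X : Type*} [NormedAddCommGroup X]
    {H : Type*} [NormedAddCommGroup H] [InnerProductSpace ℝ H]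
    (K : X → X → ℝ) (L : ℝ) (Φ : X → H) (g : H) (f : X → ℝ)
    (hK : ∀ x y, K x y = ⟪Φ x, Φ y⟫)
    (hdiag : ∀ x, K x x = 1)
    (hLipK : ∀ x y, |K x y - K x x| ≤ L * ‖x - y‖)
    (hf : ∀ x, f x = ⟪g, Φ x⟫)
    (hg : ‖g‖ ≤ 1) :
    ∀ x y, |f x - f y| ≤ Real.sqrt (2 * L * ‖x - y‖) := by
  intro x y
  have hsq : ‖Φ x - Φ y‖ ^ 2 ≤ 2 * L * ‖x - y‖ := by
    have h1 : ‖Φ x - Φ y‖ ^ 2 = K x x - 2 * K x y + K y y := by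
      rw [@norm_sub_sq_real, hK, hK, hK, real_inner_self_eq_norm_sq,
        real_inner_self_eq_norm_sq]
    have h2 := hLipK x y
    have h3 := hLipK y x
    rw [hdiag x] at h2
    rw [hdiag y] at h3
    have h2' : 1 - K x y ≤ L * ‖x - y‖ := (abs_le.mp h2).2 |>.trans_eq rfl |> fun h => by linarith [(abs_le.mp h2).1]
    have h3' : 1 - K y x ≤ L * ‖y - x‖ := by linarith [(abs_le.mp h3).1]
    have hxy : K x y = K y x := by rw [hK, hK, real_inner_comm]
    rw [h1, hdiag, hdiag, norm_sub_rev x y] at *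
    nlinarith [h3', hxy]
  have hval : |f x - f y| ≤ ‖Φ x - Φ y‖ := by
    rw [hf, hf, ← inner_sub_right]
    calc |⟪g, Φ x - Φ y⟫| ≤ ‖g‖ * ‖Φ x - Φ y‖ := abs_real_inner_le_norm _ _
      _ ≤ 1 * ‖Φ x - Φ y‖ := by
          exact mul_le_mul_of_nonneg_right hg (norm_nonneg _)
      _ = ‖Φ x - Φ y‖ := one_mul _
  calc |f x - f y| ≤ ‖Φ x - Φ y‖ := hval
    _ = Real.sqrt (‖Φ x - Φ y‖ ^ 2) := by rw [Real.sqrt_sq (norm_nonneg _)]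
    _ ≤ Real.sqrt (2 * L * ‖x - y‖) := Real.sqrt_le_sqrt hsq
end

section
/- Suppose σ_j(S) = j^{-β} are the eigenvalues of a positive operator S, and we allocate T samples with multiplicities m_j = max(1/λ − 1/λ_j, 0) where λ_j = j^{-β}. Then with λ = T^{-β/(β+1)}, the information gain ∑_j log(1 + m_j λ_j) is at most c·log(T)·T^{1/(β+1)} for some universal constant c. -/
theorem stmt_13 :
    ∃ c : ℝ, 0 < c ∧ ∀ β : ℝ, 0 < β → ∀ T : ℝ, 2 ≤ T →
      (∑' j : ℕ+,
          Real.log (1 + max ((T ^ (-β / (β + 1)))⁻¹ - ((j : ℝ) ^ (-β))⁻¹) 0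
            * (j : ℝ) ^ (-β)))
        ≤ c * Real.log T * T ^ ((1 : ℝ) / (β + 1)) := by
  refine ⟨2, by norm_num, ?_⟩
  intro β hβ T hT
  have hT0 : (0:ℝ) < T := by linarith
  have hT1 : (1:ℝ) ≤ T := by linarith
  have hβ1 : (0:ℝ) < β + 1 := by linarith
  set N : ℝ := T ^ ((1:ℝ)/(β+1)) with hN
  have hN1 : (1:ℝ) ≤ N := Real.one_le_rpow hT1 (by positivity)
  have hN0 : (0:ℝ) ≤ N := by linarith
  have hlogT : 0 < Real.log T := Real.log_pos (by linarith)
  set M : ℕ+ := ⟨⌊N⌋₊ + 1, Nat.succ_pos _⟩ with hM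
  set f : ℕ+ → ℝ := fun j => Real.log (1 + max ((T ^ (-β / (β + 1)))⁻¹ - ((j : ℝ) ^ (-β))⁻¹) 0
            * (j : ℝ) ^ (-β)) with hf
  have hb : ∀ j : ℕ+, (0:ℝ) < (j:ℝ) ^ (-β) := by
    intro j
    have : (0:ℝ) < (j:ℝ) := by exact_mod_cast j.pos
    positivity
  have hb1 : ∀ j : ℕ+, (j:ℝ) ^ (-β) ≤ 1 := by
    intro j
    have h1 : (1:ℝ) ≤ (j:ℝ) := by exact_mod_cast j.one_le
    exact Real.rpow_le_one_of_one_le_of_nonpos h1 (by linarith)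
  have ha : (1:ℝ) ≤ (T ^ (-β / (β + 1)))⁻¹ := by
    have : T ^ (-β / (β + 1)) ≤ 1 := by
      apply Real.rpow_le_one_of_one_le_of_nonpos hT1
      apply div_nonpos_of_nonpos_of_nonneg <;> linarith
    have hpos : (0:ℝ) < T ^ (-β / (β + 1)) := by positivity
    exact one_le_inv_iff₀.mpr ⟨hpos, this⟩
  have ha0 : (0:ℝ) < (T ^ (-β / (β + 1)))⁻¹ := by positivity
  -- each term bounded by log T
  have hterm : ∀ j : ℕ+, f j ≤ Real.log T := by
    intro j
    have hbj := hb j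
    have key : 1 + max ((T ^ (-β / (β + 1)))⁻¹ - ((j : ℝ) ^ (-β))⁻¹) 0
            * (j : ℝ) ^ (-β) ≤ (T ^ (-β / (β + 1)))⁻¹ := by
      rcases le_total ((T ^ (-β / (β + 1)))⁻¹ - ((j : ℝ) ^ (-β))⁻¹) 0 with h | h
      · rw [max_eq_right h, zero_mul, add_zero]; exact ha
      · rw [max_eq_left h, sub_mul, inv_mul_cancel₀ (ne_of_gt hbj)]
        have : (T ^ (-β / (β + 1)))⁻¹ * (j:ℝ) ^ (-β) ≤ (T ^ (-β / (β + 1)))⁻¹ * 1 :=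
          mul_le_mul_of_nonneg_left (hb1 j) (le_of_lt ha0)
        linarith
    calc f j ≤ Real.log ((T ^ (-β / (β + 1)))⁻¹) := by
          apply Real.log_le_log (by positivity) key
      _ = (β / (β+1)) * Real.log T := by
          rw [Real.log_inv, Real.log_rpow hT0]; ring
      _ ≤ 1 * Real.log T := by
          apply mul_le_mul_of_nonneg_right _ hlogT.le
          rw [div_le_one hβ1]; linarith
      _ = Real.log T := one_mul _
  have hzero : ∀ j : ℕ+, j ∉ Finset.Icc 1 M → f j = 0 := by
    intro j hj
    have hjM : M < j := by
      by_contra h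
      exact hj (Finset.mem_Icc.mpr ⟨j.one_le, not_lt.mp h⟩)
    have hjN : N < (j:ℝ) := by
      have h1 : N < (M:ℝ) := by
        have := Nat.lt_floor_add_one N
        simp only [hM, PNat.mk_coe] at *
        push_cast
        linarith
      have h2 : (M:ℝ) ≤ (j:ℝ) := by exact_mod_cast hjM.le
      linarith
    have hlt : T ^ (β/(β+1)) < (j:ℝ) ^ β := by
      have : N ^ β < (j:ℝ) ^ β := Real.rpow_lt_rpow hN0 hjN hβ
      calc T ^ (β/(β+1)) = (T ^ ((1:ℝ)/(β+1))) ^ β := by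
            rw [← Real.rpow_mul hT0.le]; congr 1; ring
          _ < (j:ℝ) ^ β := this
    have hle : ((j:ℝ) ^ (-β)) < T ^ (-β/(β+1)) := by
      have e1 : ((j:ℝ))^(-β) = (((j:ℝ))^β)⁻¹ := by
        rw [Real.rpow_neg (by positivity : (0:ℝ) ≤ (j:ℝ))]
      have e2 : T^(-β/(β+1)) = (T^(β/(β+1)))⁻¹ := by
        rw [show -β/(β+1) = -(β/(β+1)) by ring, Real.rpow_neg hT0.le]
      rw [e1, e2]
      exact inv_strictAnti₀ (by positivity) hlt
    have hmax : max ((T ^ (-β / (β + 1)))⁻¹ - ((j : ℝ) ^ (-β))⁻¹) 0 = 0 := by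
      apply max_eq_right
      have := inv_strictAnti₀ (by positivity : (0:ℝ) < (j:ℝ)^(-β)) hle
      linarith
    simp [hf, hmax]
  have hsum : (∑' j : ℕ+, f j) = ∑ j ∈ Finset.Icc 1 M, f j := tsum_eq_sum hzero
  rw [show (∑' j : ℕ+,
          Real.log (1 + max ((T ^ (-β / (β + 1)))⁻¹ - ((j : ℝ) ^ (-β))⁻¹) 0
            * (j : ℝ) ^ (-β))) = ∑' j : ℕ+, f j from rfl, hsum]
  have hcard : (Finset.Icc (1:ℕ+) M).card = M := by
    rw [PNat.card_Icc]; simp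
  calc ∑ j ∈ Finset.Icc 1 M, f j ≤ ∑ j ∈ Finset.Icc 1 M, Real.log T :=
        Finset.sum_le_sum fun j _ => hterm j
    _ = (M:ℝ) * Real.log T := by rw [Finset.sum_const, hcard, nsmul_eq_mul]
    _ ≤ (2*N) * Real.log T := by
        apply mul_le_mul_of_nonneg_right _ hlogT.le
        have h1 : (⌊N⌋₊:ℝ) ≤ N := Nat.floor_le hN0
        have : (M:ℝ) = (⌊N⌋₊:ℝ) + 1 := by simp [hM]
        linarith
    _ = 2 * Real.log T * N := by ring
end

section
/- If F : subsets → ℝ is a monotone submodular function with F(∅) = 0, then the greedy algorithm choosing T elements achieves value at least (1 − 1/e) times the maximum of F over all sets of size T; equivalently, the max is at most (1 − 1/e)^{-1} times the greedy value. -/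
/-- Nemhauser–Wolsey–Fisher: for a monotone submodular `F` with `F ∅ = 0`, the greedy
algorithm picking `T` elements achieves at least `(1 - 1/e)` of the optimum over
sets of size `T`. -/
theorem stmt_19 {E : Type*} [Fintype E] [DecidableEq E] [Nonempty E]
    (F : Finset E → ℝ)
    (hmono : ∀ A B : Finset E, A ⊆ B → F A ≤ F B)
    (hsub : ∀ A B : Finset E, A ⊆ B → ∀ x : E, x ∉ B →
      F (insert x B) - F B ≤ F (insert x A) - F A)
    (hempty : F ∅ = 0)
    (g : ℕ → E)
    (hgreedy : ∀ t : ℕ, ∀ x : E,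
      F (insert x ((Finset.range t).image g)) - F ((Finset.range t).image g) ≤
        F (insert (g t) ((Finset.range t).image g)) - F ((Finset.range t).image g))
    (T : ℕ) :
    ∀ S : Finset E, S.card = T →
      (1 - (Real.exp 1)⁻¹) * F S ≤ F ((Finset.range T).image g) := by
  intro S hS
  rcases Nat.eq_zero_or_pos T with hT0 | hTpos
  · subst hT0
    have : S = ∅ := Finset.card_eq_zero.mp hS
    subst this
    simp [hempty]
  set G : ℕ → Finset E := fun t => (Finset.range t).image g with hG
  have hmarg_nonneg : ∀ (A : Finset E) (x : E), 0 ≤ F (insert x A) - F A := by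
    intro A x
    have := hmono A (insert x A) (Finset.subset_insert x A)
    linarith
  -- submodular sum lemma
  have L1 : ∀ (s A : Finset E), F (A ∪ s) ≤ F A + s.sum (fun x => F (insert x A) - F A) := by
    intro s
    induction s using Finset.induction_on with
    | empty => intro A; simp
    | @insert y s hy ih =>
      intro A
      rw [Finset.sum_insert hy]
      have h1 : A ∪ insert y s = insert y (A ∪ s) := Finset.union_insert y A s
      rw [h1]
      by_cases hyA : y ∈ A ∪ s
      · rw [Finset.insert_eq_self.2 hyA]
        have h2 := ih A
        have h3 := hmarg_nonneg A y
        linarith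
      · have h2 := hsub A (A ∪ s) Finset.subset_union_left y hyA
        have h3 := ih A
        have h4 := hmarg_nonneg (A ∪ s) y
        linarith
  have hGsucc : ∀ t, G (t + 1) = insert (g t) (G t) := by
    intro t
    simp [hG, Finset.range_add_one, Finset.image_insert]
  have hTR : (0:ℝ) < T := by exact_mod_cast hTpos
  -- recursion
  have hrec : ∀ t, F S - F (G (t+1)) ≤ (1 - 1/(T:ℝ)) * (F S - F (G t)) := by
    intro t
    set δ : ℝ := F (G (t+1)) - F (G t) with hδ
    have hstep : F S - F (G t) ≤ T * δ := by
      have h1 : F S ≤ F (G t ∪ S) := hmono _ _ Finset.subset_union_right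
      have h2 := L1 S (G t)
      have h3 : S.sum (fun x => F (insert x (G t)) - F (G t)) ≤ S.card • δ := by
        apply Finset.sum_le_card_nsmul
        intro x _
        have := hgreedy t x
        rw [hδ, hGsucc t]
        exact this
      rw [hS, nsmul_eq_mul] at h3
      linarith
    have h5 : (F S - F (G t)) / T ≤ δ := by
      rw [div_le_iff₀ hTR]; linarith
    have h6 : F S - F (G (t+1)) = F S - F (G t) - δ := by rw [hδ]; ring
    rw [h6]
    have : (1 - 1/(T:ℝ)) * (F S - F (G t)) = (F S - F (G t)) - (F S - F (G t)) / T := by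
      field_simp
    rw [this]
    linarith
  have hc0 : (0:ℝ) ≤ 1 - 1/(T:ℝ) := by
    have : 1/(T:ℝ) ≤ 1 := by
      rw [div_le_one hTR]; exact_mod_cast hTpos
    linarith
  have hGzero : F (G 0) = 0 := by simp [hG, hempty]
  have hiter : ∀ n, F S - F (G n) ≤ (1 - 1/(T:ℝ))^n * (F S) := by
    intro n
    induction n with
    | zero => simp [hGzero]
    | succ n ih =>
      calc F S - F (G (n+1)) ≤ (1 - 1/(T:ℝ)) * (F S - F (G n)) := hrec n
        _ ≤ (1 - 1/(T:ℝ)) * ((1 - 1/(T:ℝ))^n * F S) := by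
            exact mul_le_mul_of_nonneg_left ih hc0
        _ = (1 - 1/(T:ℝ))^(n+1) * F S := by ring
  have hFS : 0 ≤ F S := by
    have := hmono ∅ S (Finset.empty_subset S)
    linarith
  have hpow : (1 - 1/(T:ℝ))^T ≤ (Real.exp 1)⁻¹ := by
    have h1 : 1 - 1/(T:ℝ) ≤ Real.exp (-(1/(T:ℝ))) := by
      have := Real.add_one_le_exp (-(1/(T:ℝ)))
      linarith
    have h2 : (1 - 1/(T:ℝ))^T ≤ (Real.exp (-(1/(T:ℝ))))^T :=
      pow_le_pow_left₀ hc0 h1 T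
    have h3 : (Real.exp (-(1/(T:ℝ))))^T = Real.exp (-1) := by
      rw [← Real.exp_nat_mul]
      congr 1
      field_simp
    rw [h3, Real.exp_neg] at h2
    exact h2
  have hfinal := hiter T
  have h7 : (1 - 1/(T:ℝ))^T * F S ≤ (Real.exp 1)⁻¹ * F S :=
    mul_le_mul_of_nonneg_right hpow hFS
  have : F S - F (G T) ≤ (Real.exp 1)⁻¹ * F S := le_trans hfinal h7
  have hGT : G T = (Finset.range T).image g := rfl
  rw [← hGT]
  linarith
end
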